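/- Let n ≥ 3, let A = (a_{ij})_{1≤i,j≤n} be an n × n real array with σ_A² > 0, let π be a permutation of {1,…,n} chosen uniformly at random, and let Y = Σ_{i=1}^n a_{iπ(i)}. Then for all t ≥ 0, both P(Y − μ_A ≥ t) and P(Y − μ_A ≤ −t) are at most exp(−t² / (2(σ_A² + 8‖a‖ t))). -/

import Mathlib

open MeasureTheory ProbabilityTheory Real

noncomputable instance (n : ℕ) : MeasurableSpace (Equiv.Perm (Fin n)) := ⊤

/-- The uniform distribution on the permutations of `{1, …, n}`. -/
noncomputable def uniformPerm (n : ℕ) : Measure (Equiv.Perm (Fin n)) :=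
  (PMF.uniformOfFintype (Equiv.Perm (Fin n))).toMeasure

/-- Row mean `a_{i·}`. -/
noncomputable def rowMean (n : ℕ) (a : Fin n → Fin n → ℝ) (i : Fin n) : ℝ :=
  (1 / (n : ℝ)) * ∑ j, a i j

/-- Column mean `a_{·j}`. -/
noncomputable def colMean (n : ℕ) (a : Fin n → Fin n → ℝ) (j : Fin n) : ℝ :=
  (1 / (n : ℝ)) * ∑ i, a i j

/-- Grand mean `a_{··}`. -/
noncomputable def grandMean (n : ℕ) (a : Fin n → Fin n → ℝ) : ℝ :=
  (1 / (n : ℝ) ^ 2) * ∑ i, ∑ j, a i j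

/-- The mean `μ_A = n a_{··}` of the Hoeffding statistic. -/
noncomputable def muA (n : ℕ) (a : Fin n → Fin n → ℝ) : ℝ :=
  n * grandMean n a

/-- The variance `σ_A²` of the Hoeffding statistic. -/
noncomputable def sigmaA2 (n : ℕ) (a : Fin n → Fin n → ℝ) : ℝ :=
  (1 / ((n : ℝ) - 1)) * ∑ i, ∑ j,
    (a i j - rowMean n a i - colMean n a j + grandMean n a) ^ 2

/-!
Write `c i j = a i j - a_{i·}`, so that `Y - μ_A = F π := ∑ i, c i (π i)`, and let
`M θ = ∑ π, exp (θ F π)`. Since the rows of `c` sum to zero, `2 n F π` is the sum over `i, j` of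
the increments `F π - F (π ∘ (i j))`. Pairing `π` with `π ∘ (i j)` and using the trapezoid
inequality for `exp` bounds `M' θ` by `θ / 2` times the tilted second moment of these increments.
Conditioning on `(π i, π j)` changes the tilted weights by at most `exp (8 ‖a‖ θ)`, because two
transpositions move `F` by at most `8 ‖a‖`, and
`∑ i j k l, (c i k + c j l - c i l - c j k) ^ 2 = 4 n² (n - 1) σ_A²`.
Hence `(log M)' θ ≤ σ_A² θ exp (8 ‖a‖ θ)`, which integrates to
`log M θ - log M 0 ≤ σ_A² θ² / (2 (1 - 8 ‖a‖ θ))`; Chernoff's bound at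
`θ = t / (σ_A² + 8 ‖a‖ t)` gives the upper tail, and the lower tail is the upper tail for `-c`.
-/

open Finset Equiv

namespace Real

lemma exp_mul_one_sub_le_one (y : ℝ) : exp y * (1 - y) ≤ 1 := by
  calc exp y * (1 - y) ≤ exp y * exp (-y) := by
        gcongr; linarith [add_one_le_exp (-y)]
    _ = 1 := by rw [← exp_add, add_neg_cancel, exp_zero]

lemma two_sub_mul_exp_le {h : ℝ} (hh : 0 ≤ h) : (2 - h) * exp h ≤ 2 + h := by
  have hmono : MonotoneOn (fun x ↦ 2 + x - (2 - x) * exp x) (Set.Ici 0) := by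
    refine monotoneOn_of_deriv_nonneg (convex_Ici 0) (by fun_prop) (by fun_prop) fun x _ ↦ ?_
    have hd : HasDerivAt (fun x ↦ 2 + x - (2 - x) * exp x) (1 - (1 - x) * exp x) x :=
      (((hasDerivAt_id' x).const_add 2).fun_sub
        (((hasDerivAt_id' x).const_sub 2).fun_mul (hasDerivAt_exp x))).congr_deriv (by ring)
    rw [hd.deriv, sub_nonneg, mul_comm]
    exact exp_mul_one_sub_le_one x
  simpa using hmono Set.self_mem_Ici hh hh

/-- The trapezoid rule overestimates `∫ v..u, exp`, since `exp` is convex. -/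
lemma sub_mul_exp_sub_exp_le (u v : ℝ) :
    (u - v) * (exp u - exp v) ≤ (u - v) ^ 2 * (exp u + exp v) / 2 := by
  wlog hvu : v ≤ u generalizing u v
  · linarith [this v u (by linarith)]
  obtain ⟨d, hd, rfl⟩ : ∃ d, 0 ≤ d ∧ u = v + d := ⟨u - v, by linarith, by ring⟩
  have key := mul_le_mul_of_nonneg_left (two_sub_mul_exp_le hd) (mul_nonneg hd (exp_pos v).le)
  rw [exp_add]
  nlinarith

lemma sub_mul_exp_mul_sub_exp_mul_le {θ : ℝ} (hθ : 0 ≤ θ) (x y : ℝ) :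
    (x - y) * (exp (θ * x) - exp (θ * y)) ≤
      θ / 2 * ((x - y) ^ 2 * (exp (θ * x) + exp (θ * y))) := by
  rcases hθ.eq_or_lt with rfl | hθ
  · simp
  have key := sub_mul_exp_sub_exp_le (θ * x) (θ * y)
  refine le_of_mul_le_mul_left ?_ hθ
  nlinarith

lemma exp_le_two_sub_div {y : ℝ} (hy0 : 0 ≤ y) (hy1 : y < 1) :
    exp y ≤ (2 - y) / (2 * (1 - y) ^ 2) := by
  rw [le_div_iff₀ (by nlinarith)]
  nlinarith [exp_mul_one_sub_le_one y]

end Real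

lemma hasDerivAt_sq_div_two_mul_one_sub {b s : ℝ} (h : b * s ≠ 1) :
    HasDerivAt (fun s ↦ s ^ 2 / (2 * (1 - b * s))) (s * (2 - b * s) / (2 * (1 - b * s) ^ 2)) s := by
  have hden : 2 * (1 - b * s) ≠ 0 := fun h0 ↦ h (by linarith)
  refine ((hasDerivAt_pow 2 s).div (((hasDerivAt_id' s).const_mul b).const_sub 1 |>.const_mul 2)
    hden).congr_deriv ?_
  field_simp
  ring

lemma sum_sub_mul_exp_le_of_involutive {α : Type*} [Fintype α] {τ : α → α}
    (hτ : Function.Involutive τ) (F : α → ℝ) {θ : ℝ} (hθ : 0 ≤ θ) :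
    ∑ p, (F p - F (τ p)) * exp (θ * F p) ≤
      θ / 2 * ∑ p, (F p - F (τ p)) ^ 2 * exp (θ * F p) := by
  have reindex (g : α → α → ℝ) : ∑ p, g (τ p) p = ∑ p, g p (τ p) := by
    simpa only [Function.Involutive.coe_toPerm, hτ _] using
      Equiv.sum_comp (hτ.toPerm τ) (fun p ↦ g p (τ p))
  have hlin : ∑ p, (F p - F (τ p)) * exp (θ * F (τ p)) =
      -∑ p, (F p - F (τ p)) * exp (θ * F p) := by
    rw [reindex fun q p ↦ (F p - F q) * exp (θ * F q), ← sum_neg_distrib]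
    exact sum_congr rfl fun p _ ↦ by ring
  have hsq : ∑ p, (F p - F (τ p)) ^ 2 * exp (θ * F (τ p)) =
      ∑ p, (F p - F (τ p)) ^ 2 * exp (θ * F p) := by
    rw [reindex fun q p ↦ (F p - F q) ^ 2 * exp (θ * F q)]
    exact sum_congr rfl fun p _ ↦ by ring
  have hpair := sum_le_sum fun p (_ : p ∈ univ) ↦
    sub_mul_exp_mul_sub_exp_mul_le hθ (F p) (F (τ p))
  simp only [mul_sub, mul_add, sum_sub_distrib, sum_add_distrib, ← mul_sum, hlin, hsq] at hpair
  linarith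

lemma sum_sum_sub_sq_of_sum_eq_zero {ι : Type*} [Fintype ι] (x : ι → ℝ) (hx : ∑ i, x i = 0) :
    ∑ i, ∑ j, (x i - x j) ^ 2 = 2 * Fintype.card ι * ∑ i, x i ^ 2 := by
  simp only [sub_sq, sum_add_distrib, sum_sub_distrib, sum_const, card_univ, nsmul_eq_mul,
    mul_assoc, ← mul_sum, ← sum_mul, hx]
  ring

lemma sum_sum_sum_sum_sq_eq_of_sum_eq_zero {ι : Type*} [Fintype ι] (d : ι → ι → ℝ)
    (hrow : ∀ i, ∑ k, d i k = 0) (hcol : ∀ k, ∑ i, d i k = 0) :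
    ∑ i, ∑ j, ∑ k, ∑ l, (d i k + d j l - d i l - d j k) ^ 2 =
      4 * (Fintype.card ι : ℝ) ^ 2 * ∑ i, ∑ k, d i k ^ 2 := by
  set n : ℝ := (Fintype.card ι : ℝ)
  calc ∑ i, ∑ j, ∑ k, ∑ l, (d i k + d j l - d i l - d j k) ^ 2
      = ∑ i, ∑ j, ∑ k, ∑ l, ((d i k - d j k) - (d i l - d j l)) ^ 2 := by
        exact sum_congr rfl fun i _ ↦ sum_congr rfl fun j _ ↦ sum_congr rfl fun k _ ↦
          sum_congr rfl fun l _ ↦ by ring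
    _ = ∑ i, ∑ j, 2 * n * ∑ k, (d i k - d j k) ^ 2 := by
        congr! 4 with i _ j _
        exact sum_sum_sub_sq_of_sum_eq_zero _ (by rw [sum_sub_distrib, hrow, hrow, sub_self])
    _ = 2 * n * ∑ k, ∑ i, ∑ j, (d i k - d j k) ^ 2 := by
        simp only [← mul_sum]
        congr 1
        calc _ = ∑ i, ∑ k, ∑ j, (d i k - d j k) ^ 2 := sum_congr rfl fun i _ ↦ sum_comm
          _ = _ := sum_comm
    _ = 2 * n * ∑ k, 2 * n * ∑ i, d i k ^ 2 := by
        congr! 3 with k _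
        exact sum_sum_sub_sq_of_sum_eq_zero (d · k) (hcol k)
    _ = 4 * n ^ 2 * ∑ i, ∑ k, d i k ^ 2 := by
        rw [← mul_sum, sum_comm]; ring

section PermSum

variable {ι : Type*} [Fintype ι] [DecidableEq ι]

def permSum (c : ι → ι → ℝ) (p : Perm ι) : ℝ := ∑ i, c i (p i)

lemma permSum_sub_permSum_mul_swap (c : ι → ι → ℝ) (p : Perm ι) (i j : ι) :
    permSum c p - permSum c (p * swap i j) = c i (p i) + c j (p j) - c i (p j) - c j (p i) := by
  rcases eq_or_ne i j with rfl | hij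
  · simp only [swap_self, ← Perm.one_def, mul_one]; ring
  rw [permSum, permSum, ← sum_sub_distrib, Fintype.sum_eq_add i j hij]
  · simp only [Perm.mul_apply, swap_apply_left, swap_apply_right]; ring
  · rintro m ⟨hi, hj⟩
    simp [swap_apply_of_ne_of_ne hi hj]

noncomputable def permLaplace (c : ι → ι → ℝ) (θ : ℝ) : ℝ := ∑ p : Perm ι, exp (θ * permSum c p)

lemma permLaplace_pos (c : ι → ι → ℝ) (θ : ℝ) : 0 < permLaplace c θ :=
  sum_pos (fun _ _ ↦ exp_pos _) univ_nonempty

lemma hasDerivAt_permLaplace (c : ι → ι → ℝ) (θ : ℝ) :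
    HasDerivAt (permLaplace c) (∑ p, permSum c p * exp (θ * permSum c p)) θ := by
  unfold permLaplace
  exact HasDerivAt.fun_sum fun p _ ↦
    ((hasDerivAt_mul_const (permSum c p)).exp).congr_deriv (mul_comm _ _)

variable {c : ι → ι → ℝ} {N θ : ℝ}

lemma sum_sum_permSum_sub_permSum_mul_swap (hrow : ∀ i, ∑ j, c i j = 0) (p : Perm ι) :
    ∑ i, ∑ j, (permSum c p - permSum c (p * swap i j)) =
      2 * Fintype.card ι * permSum c p := by
  have hcomp : ∀ i, ∑ j, c i (p j) = 0 := fun i ↦ (Equiv.sum_comp p (c i)).trans (hrow i)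
  simp only [permSum_sub_permSum_mul_swap, sum_sub_distrib, sum_add_distrib, sum_const,
    card_univ, nsmul_eq_mul, hcomp, sum_comm (γ := ι) (f := fun i j ↦ c j (p i))]
  simp only [permSum, ← mul_sum]
  ring

lemma abs_permSum_sub_permSum_mul_swap_le (hc : ∀ i j, |c i j| ≤ N) (p : Perm ι) (i j : ι) :
    |permSum c p - permSum c (p * swap i j)| ≤ 4 * N := by
  rw [permSum_sub_permSum_mul_swap, abs_le]
  have := abs_le.1 (hc i (p i)); have := abs_le.1 (hc j (p j))
  have := abs_le.1 (hc i (p j)); have := abs_le.1 (hc j (p i))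
  constructor <;> linarith

lemma abs_permSum_swap_mul_sub_le (hc : ∀ i j, |c i j| ≤ N) (p : Perm ι) (u v : ι) :
    |permSum c (swap u v * p) - permSum c p| ≤ 4 * N := by
  rw [swap_mul_eq_mul_swap, abs_sub_comm]
  exact abs_permSum_sub_permSum_mul_swap_le hc p _ _

lemma exists_perm_abs_permSum_mul_sub_le (hc : ∀ i j, |c i j| ≤ N) {k l k' l' : ι}
    (hkl : k ≠ l) (hkl' : k' ≠ l') :
    ∃ ρ : Perm ι, ρ k = k' ∧ ρ l = l' ∧ ∀ p, |permSum c (ρ * p) - permSum c p| ≤ 8 * N := by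
  have hl : swap k k' l ≠ k' := fun h ↦
    hkl ((swap k k').injective (h.trans (swap_apply_left k k').symm)).symm
  refine ⟨swap (swap k k' l) l' * swap k k', ?_, ?_, fun p ↦ ?_⟩
  · simp [swap_apply_of_ne_of_ne (Ne.symm hl) hkl']
  · simp
  · rw [mul_assoc]
    calc _ ≤ |permSum c (swap (swap k k' l) l' * (swap k k' * p)) - permSum c (swap k k' * p)|
          + |permSum c (swap k k' * p) - permSum c p| := abs_sub_le _ _ _
      _ ≤ 4 * N + 4 * N := add_le_add (abs_permSum_swap_mul_sub_le hc _ _ _)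
          (abs_permSum_swap_mul_sub_le hc _ _ _)
      _ = 8 * N := by ring

lemma card_offDiag_mul_sum_fiber_le (hc : ∀ i j, |c i j| ≤ N) (hθ : 0 ≤ θ) {i j k l : ι}
    (hij : i ≠ j) (hkl : k ≠ l) :
    (#(univ : Finset ι).offDiag : ℝ) *
        ∑ p with (p i, p j) = (k, l), exp (θ * permSum c p) ≤
      exp (8 * N * θ) * permLaplace c θ := by
  have hcompare : ∀ kl' ∈ (univ : Finset ι).offDiag,
      ∑ p with (p i, p j) = (k, l), exp (θ * permSum c p) ≤
        exp (8 * N * θ) * ∑ p with (p i, p j) = kl', exp (θ * permSum c p) := by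
    rintro ⟨k', l'⟩ hkl'
    obtain ⟨ρ, rfl, rfl, hρ⟩ :=
      exists_perm_abs_permSum_mul_sub_le hc hkl (mem_offDiag.1 hkl').2.2
    rw [mul_sum]
    calc ∑ p with (p i, p j) = (k, l), exp (θ * permSum c p)
        ≤ ∑ p with (p i, p j) = (k, l), exp (8 * N * θ) * exp (θ * permSum c (ρ * p)) := by
          refine sum_le_sum fun p _ ↦ ?_
          rw [← exp_add, exp_le_exp]
          nlinarith [(abs_le.1 (hρ p)).1]
      _ = _ := sum_equiv (Equiv.mulLeft ρ) (fun p ↦ by simp) (fun _ _ ↦ rfl)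
  have := sum_le_sum hcompare
  rw [sum_const, nsmul_eq_mul, ← mul_sum, sum_fiberwise_of_maps_to] at this
  · exact this
  · intro p _
    exact mem_offDiag.2 ⟨mem_univ _, mem_univ _, fun h ↦ hij (p.injective h)⟩

lemma card_offDiag_mul_sum_le (hc : ∀ i j, |c i j| ≤ N) (hθ : 0 ≤ θ) {i j : ι} (hij : i ≠ j)
    (h : ι → ι → ℝ) (hh : ∀ k l, 0 ≤ h k l) :
    (#(univ : Finset ι).offDiag : ℝ) * ∑ p : Perm ι, h (p i) (p j) * exp (θ * permSum c p) ≤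
      exp (8 * N * θ) * permLaplace c θ * ∑ k, ∑ l, h k l := by
  have hmaps : ∀ p ∈ (univ : Finset (Perm ι)), (p i, p j) ∈ (univ : Finset ι).offDiag :=
    fun p _ ↦ mem_offDiag.2 ⟨mem_univ _, mem_univ _, fun h ↦ hij (p.injective h)⟩
  rw [← sum_fiberwise_of_maps_to hmaps, mul_sum, ← sum_product']
  calc ∑ kl ∈ (univ : Finset ι).offDiag, (#(univ : Finset ι).offDiag : ℝ) *
        ∑ p with (p i, p j) = kl, h (p i) (p j) * exp (θ * permSum c p)
      = ∑ kl ∈ (univ : Finset ι).offDiag, h kl.1 kl.2 * ((#(univ : Finset ι).offDiag : ℝ) *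
          ∑ p with (p i, p j) = kl, exp (θ * permSum c p)) := by
        refine sum_congr rfl fun kl _ ↦ ?_
        rw [mul_sum, mul_sum, mul_sum]
        refine sum_congr rfl fun p hp ↦ ?_
        rw [← (mem_filter.1 hp).2]; ring
    _ ≤ ∑ kl ∈ (univ : Finset ι).offDiag, h kl.1 kl.2 * (exp (8 * N * θ) * permLaplace c θ) := by
        refine sum_le_sum fun ⟨k, l⟩ hkl ↦ mul_le_mul_of_nonneg_left ?_ (hh k l)
        exact card_offDiag_mul_sum_fiber_le hc hθ hij (mem_offDiag.1 hkl).2.2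
    _ ≤ ∑ kl ∈ univ ×ˢ univ, h kl.1 kl.2 * (exp (8 * N * θ) * permLaplace c θ) :=
        sum_le_sum_of_subset_of_nonneg (fun kl _ ↦ by simp) fun kl _ _ ↦
          mul_nonneg (hh _ _) (mul_nonneg (exp_pos _).le (permLaplace_pos c θ).le)
    _ = _ := by rw [← sum_mul]; ring

lemma card_offDiag_mul_sum_sub_permSum_mul_swap_mul_exp_le (hc : ∀ i j, |c i j| ≤ N)
    (hθ : 0 ≤ θ) (i j : ι) :
    (#(univ : Finset ι).offDiag : ℝ) *
        ∑ p, (permSum c p - permSum c (p * swap i j)) * exp (θ * permSum c p) ≤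
      θ / 2 * (exp (8 * N * θ) * permLaplace c θ *
        ∑ k, ∑ l, (c i k + c j l - c i l - c j k) ^ 2) := by
  rcases eq_or_ne i j with rfl | hij
  · simp [← Perm.one_def]
  calc _ ≤ (#(univ : Finset ι).offDiag : ℝ) * (θ / 2 *
        ∑ p, (permSum c p - permSum c (p * swap i j)) ^ 2 * exp (θ * permSum c p)) := by
        gcongr
        exact sum_sub_mul_exp_le_of_involutive (mul_swap_involutive i j) _ hθ
    _ = θ / 2 * ((#(univ : Finset ι).offDiag : ℝ) *
        ∑ p, (c i (p i) + c j (p j) - c i (p j) - c j (p i)) ^ 2 * exp (θ * permSum c p)) := by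
        simp only [permSum_sub_permSum_mul_swap]; ring
    _ ≤ _ := mul_le_mul_of_nonneg_left (card_offDiag_mul_sum_le hc hθ hij
        (fun k l ↦ (c i k + c j l - c i l - c j k) ^ 2) fun _ _ ↦ sq_nonneg _) (by positivity)

lemma sum_permSum_mul_exp_le (hn : 2 ≤ Fintype.card ι) (hc : ∀ i j, |c i j| ≤ N)
    (hrow : ∀ i, ∑ j, c i j = 0) {σ2 : ℝ}
    (hV : ∑ i, ∑ j, ∑ k, ∑ l, (c i k + c j l - c i l - c j k) ^ 2 ≤
      4 * (Fintype.card ι : ℝ) ^ 2 * (Fintype.card ι - 1) * σ2) (hθ : 0 ≤ θ) :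
    ∑ p, permSum c p * exp (θ * permSum c p) ≤ θ * σ2 * exp (8 * N * θ) * permLaplace c θ := by
  have hsum : 2 * (Fintype.card ι : ℝ) * ∑ p, permSum c p * exp (θ * permSum c p) =
      ∑ i, ∑ j, ∑ p, (permSum c p - permSum c (p * swap i j)) * exp (θ * permSum c p) := by
    simp_rw [mul_sum, ← mul_assoc, ← sum_sum_permSum_sub_permSum_mul_swap hrow, sum_mul]
    rw [sum_comm]; exact sum_congr rfl fun i _ ↦ sum_comm
  have hn2 : (2 : ℝ) ≤ Fintype.card ι := by exact_mod_cast hn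
  set n : ℝ := (Fintype.card ι : ℝ)
  have hcard : (#(univ : Finset ι).offDiag : ℝ) = n * (n - 1) := by
    rw [offDiag_card, card_univ, Nat.cast_sub (Nat.le_mul_self _)]; push_cast; ring
  have hB : 0 ≤ exp (8 * N * θ) * permLaplace c θ :=
    mul_nonneg (exp_pos _).le (permLaplace_pos c θ).le
  refine le_of_mul_le_mul_left ?_ (by nlinarith : 0 < 2 * n ^ 2 * (n - 1))
  calc 2 * n ^ 2 * (n - 1) * ∑ p, permSum c p * exp (θ * permSum c p)
      = ∑ i, ∑ j, (#(univ : Finset ι).offDiag : ℝ) * ∑ p,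
          (permSum c p - permSum c (p * swap i j)) * exp (θ * permSum c p) := by
        simp only [hcard, ← mul_sum, ← hsum]; ring
    _ ≤ ∑ i, ∑ j, θ / 2 * (exp (8 * N * θ) * permLaplace c θ *
          ∑ k, ∑ l, (c i k + c j l - c i l - c j k) ^ 2) :=
        sum_le_sum fun i _ ↦ sum_le_sum fun j _ ↦
          card_offDiag_mul_sum_sub_permSum_mul_swap_mul_exp_le hc hθ i j
    _ ≤ θ / 2 * (exp (8 * N * θ) * permLaplace c θ * (4 * n ^ 2 * (n - 1) * σ2)) := by
        simp only [← mul_sum]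
        exact mul_le_mul_of_nonneg_left (mul_le_mul_of_nonneg_left hV hB) (by positivity)
    _ = _ := by ring

/-- Integrating `(log M)' ≤ σ² s e^{8Ns} ≤ σ² (s² / (2(1 - 8Ns)))'` over `[0, θ]`. -/
lemma log_permLaplace_le (hn : 2 ≤ Fintype.card ι) (hc : ∀ i j, |c i j| ≤ N)
    (hrow : ∀ i, ∑ j, c i j = 0) {σ2 : ℝ} (hσ2 : 0 ≤ σ2)
    (hV : ∑ i, ∑ j, ∑ k, ∑ l, (c i k + c j l - c i l - c j k) ^ 2 ≤
      4 * (Fintype.card ι : ℝ) ^ 2 * (Fintype.card ι - 1) * σ2)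
    (hθ : 0 ≤ θ) (hθ1 : 8 * N * θ < 1) :
    log (permLaplace c θ) ≤ log (permLaplace c 0) + σ2 * (θ ^ 2 / (2 * (1 - 8 * N * θ))) := by
  obtain ⟨i⟩ : Nonempty ι := Fintype.card_pos_iff.1 (by omega)
  have hN : 0 ≤ N := (abs_nonneg _).trans (hc i i)
  have hsmall : ∀ s ∈ Set.Icc 0 θ, 0 ≤ 8 * N * s ∧ 8 * N * s < 1 := fun s hs ↦
    ⟨by have := hs.1; positivity,
      lt_of_le_of_lt (mul_le_mul_of_nonneg_left hs.2 (by positivity)) hθ1⟩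
  have hlog (s : ℝ) : HasDerivAt (fun s ↦ log (permLaplace c s))
      ((∑ p, permSum c p * exp (s * permSum c p)) / permLaplace c s) s :=
    (hasDerivAt_permLaplace c s).log (permLaplace_pos c s).ne'
  have hbound (s : ℝ) (hs : s ∈ Set.Icc 0 θ) : HasDerivAt
      (fun s ↦ log (permLaplace c 0) + σ2 * (s ^ 2 / (2 * (1 - 8 * N * s))))
      (σ2 * (s * (2 - 8 * N * s) / (2 * (1 - 8 * N * s) ^ 2))) s :=
    ((hasDerivAt_sq_div_two_mul_one_sub (hsmall s hs).2.ne).const_mul σ2).const_add _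
  refine image_le_of_deriv_right_le_deriv_boundary
    (fun s _ ↦ (hlog s).continuousAt.continuousWithinAt) (fun s _ ↦ (hlog s).hasDerivWithinAt)
    (by simp) (fun s hs ↦ (hbound s hs).continuousAt.continuousWithinAt)
    (fun s hs ↦ (hbound s (Set.Ico_subset_Icc_self hs)).hasDerivWithinAt) (fun s hs ↦ ?_)
    ⟨hθ, le_rfl⟩
  obtain ⟨hy0, hy1⟩ := hsmall s (Set.Ico_subset_Icc_self hs)
  rw [div_le_iff₀ (permLaplace_pos c s)]
  calc ∑ p, permSum c p * exp (s * permSum c p)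
      ≤ s * σ2 * exp (8 * N * s) * permLaplace c s :=
        sum_permSum_mul_exp_le hn hc hrow hV hs.1
    _ ≤ s * σ2 * ((2 - 8 * N * s) / (2 * (1 - 8 * N * s) ^ 2)) * permLaplace c s :=
        mul_le_mul_of_nonneg_right (mul_le_mul_of_nonneg_left (exp_le_two_sub_div hy0 hy1)
          (mul_nonneg hs.1 hσ2)) (permLaplace_pos c s).le
    _ = _ := by ring

theorem card_le_permSum_le (hn : 2 ≤ Fintype.card ι) (hc : ∀ i j, |c i j| ≤ N)
    (hrow : ∀ i, ∑ j, c i j = 0) {σ2 : ℝ} (hσ2 : 0 < σ2)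
    (hV : ∑ i, ∑ j, ∑ k, ∑ l, (c i k + c j l - c i l - c j k) ^ 2 ≤
      4 * (Fintype.card ι : ℝ) ^ 2 * (Fintype.card ι - 1) * σ2) {t : ℝ} (ht : 0 ≤ t) :
    (#{p | t ≤ permSum c p} : ℝ) ≤
      Fintype.card (Perm ι) * exp (-(t ^ 2) / (2 * (σ2 + 8 * N * t))) := by
  obtain ⟨i⟩ : Nonempty ι := Fintype.card_pos_iff.1 (by omega)
  have hN : 0 ≤ N := (abs_nonneg _).trans (hc i i)
  have hA : 0 < σ2 + 8 * N * t := by positivity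
  set θ := t / (σ2 + 8 * N * t) with hθ_def
  have hθ : 0 ≤ θ := by positivity
  have hθ1 : 8 * N * θ < 1 := by
    rw [← mul_div_assoc, div_lt_one hA]; linarith
  have hmarkov : (#{p | t ≤ permSum c p} : ℝ) * exp (θ * t) ≤ permLaplace c θ := by
    rw [← nsmul_eq_mul]
    refine (card_nsmul_le_sum _ _ _ fun p hp ↦ ?_).trans
      (sum_le_sum_of_subset_of_nonneg (subset_univ _) fun p _ _ ↦ (exp_pos _).le)
    exact exp_le_exp.2 (mul_le_mul_of_nonneg_left (mem_filter.1 hp).2 hθ)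
  have hlaplace : permLaplace c θ ≤
      Fintype.card (Perm ι) * exp (σ2 * (θ ^ 2 / (2 * (1 - 8 * N * θ)))) := by
    have hM0 : permLaplace c 0 = Fintype.card (Perm ι) := by simp [permLaplace]
    rw [← hM0, ← exp_log (permLaplace_pos c θ), ← exp_log (permLaplace_pos c 0), ← exp_add]
    exact exp_le_exp.2 (log_permLaplace_le hn hc hrow hσ2.le hV hθ hθ1)
  have hexponent : σ2 * (θ ^ 2 / (2 * (1 - 8 * N * θ))) - θ * t =
      -(t ^ 2) / (2 * (σ2 + 8 * N * t)) := by
    have h1 : 1 - 8 * N * θ = σ2 / (σ2 + 8 * N * t) := by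
      rw [hθ_def]; field_simp; ring
    rw [h1, hθ_def]; field_simp; ring
  calc (#{p | t ≤ permSum c p} : ℝ)
      = #{p | t ≤ permSum c p} * exp (θ * t) * exp (-(θ * t)) := by
        rw [mul_assoc, ← exp_add, add_neg_cancel, exp_zero, mul_one]
    _ ≤ Fintype.card (Perm ι) * exp (σ2 * (θ ^ 2 / (2 * (1 - 8 * N * θ)))) * exp (-(θ * t)) :=
        mul_le_mul_of_nonneg_right (hmarkov.trans hlaplace) (exp_pos _).le
    _ = _ := by rw [mul_assoc, ← exp_add, ← sub_eq_add_neg, hexponent]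

theorem card_permSum_le_neg_le (hn : 2 ≤ Fintype.card ι) (hc : ∀ i j, |c i j| ≤ N)
    (hrow : ∀ i, ∑ j, c i j = 0) {σ2 : ℝ} (hσ2 : 0 < σ2)
    (hV : ∑ i, ∑ j, ∑ k, ∑ l, (c i k + c j l - c i l - c j k) ^ 2 ≤
      4 * (Fintype.card ι : ℝ) ^ 2 * (Fintype.card ι - 1) * σ2) {t : ℝ} (ht : 0 ≤ t) :
    (#{p | permSum c p ≤ -t} : ℝ) ≤
      Fintype.card (Perm ι) * exp (-(t ^ 2) / (2 * (σ2 + 8 * N * t))) := by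
  have hV' : ∑ i, ∑ j, ∑ k, ∑ l, ((-c) i k + (-c) j l - (-c) i l - (-c) j k) ^ 2 ≤
      4 * (Fintype.card ι : ℝ) ^ 2 * (Fintype.card ι - 1) * σ2 := by
    convert hV using 5; simp only [Pi.neg_apply]; ring
  have hneg := card_le_permSum_le (c := -c) hn (by simpa using hc)
    (by simpa [sum_neg_distrib] using hrow) hσ2 hV' ht
  convert hneg using 3
  refine filter_congr fun p _ ↦ ?_
  simp only [permSum, Pi.neg_apply, sum_neg_distrib, le_neg]

end PermSum

section HoeffdingArray

variable {n : ℕ} (a : Fin n → Fin n → ℝ)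

noncomputable def rowCentered (n : ℕ) (a : Fin n → Fin n → ℝ) (i j : Fin n) : ℝ :=
  a i j - rowMean n a i

noncomputable def doubleCentered (n : ℕ) (a : Fin n → Fin n → ℝ) (i j : Fin n) : ℝ :=
  a i j - rowMean n a i - colMean n a j + grandMean n a

lemma sum_rowMean : ∑ i, rowMean n a i = muA n a := by
  rcases eq_or_ne n 0 with rfl | hn
  · simp [muA]
  simp only [rowMean, muA, grandMean, ← mul_sum]
  field_simp

lemma permSum_rowCentered (p : Perm (Fin n)) :
    permSum (rowCentered n a) p = ∑ i, a i (p i) - muA n a := by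
  simp only [permSum, rowCentered, sum_sub_distrib, sum_rowMean]

lemma sum_rowCentered (hn : n ≠ 0) (i : Fin n) : ∑ j, rowCentered n a i j = 0 := by
  simp only [rowCentered, rowMean, sum_sub_distrib, sum_const, card_univ, Fintype.card_fin,
    nsmul_eq_mul]
  field_simp
  ring

lemma sum_doubleCentered_right (hn : n ≠ 0) (i : Fin n) : ∑ j, doubleCentered n a i j = 0 := by
  simp only [doubleCentered, rowMean, colMean, grandMean, sum_add_distrib, sum_sub_distrib,
    ← mul_sum, sum_const, card_univ, Fintype.card_fin, nsmul_eq_mul]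
  rw [sum_comm (f := fun x y ↦ a y x)]
  field_simp
  ring

lemma sum_doubleCentered_left (hn : n ≠ 0) (j : Fin n) : ∑ i, doubleCentered n a i j = 0 := by
  simp only [doubleCentered, rowMean, colMean, grandMean, sum_add_distrib, sum_sub_distrib,
    ← mul_sum, sum_const, card_univ, Fintype.card_fin, nsmul_eq_mul]
  field_simp
  ring

lemma sum_sum_doubleCentered_sq (hn : 2 ≤ n) :
    ∑ i, ∑ j, doubleCentered n a i j ^ 2 = (n - 1) * sigmaA2 n a := by
  have hn1 : (n : ℝ) - 1 ≠ 0 := by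
    have : (2 : ℝ) ≤ n := by exact_mod_cast hn
    linarith
  rw [sigmaA2]
  field_simp
  rfl

lemma sum_sq_rowCentered_swap_eq (hn : 2 ≤ n) :
    ∑ i, ∑ j, ∑ k, ∑ l, (rowCentered n a i k + rowCentered n a j l - rowCentered n a i l -
      rowCentered n a j k) ^ 2 = 4 * (n : ℝ) ^ 2 * (n - 1) * sigmaA2 n a := by
  have hn0 : n ≠ 0 := by omega
  have hdouble : ∀ i j k l, rowCentered n a i k + rowCentered n a j l - rowCentered n a i l -
      rowCentered n a j k = doubleCentered n a i k + doubleCentered n a j l -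
        doubleCentered n a i l - doubleCentered n a j k := by
    intro i j k l
    simp only [rowCentered, doubleCentered]
    ring
  simp_rw [hdouble]
  rw [sum_sum_sum_sum_sq_eq_of_sum_eq_zero _ (sum_doubleCentered_right a hn0)
    (sum_doubleCentered_left a hn0), Fintype.card_fin, sum_sum_doubleCentered_sq a hn]
  ring

end HoeffdingArray

lemma uniformPerm_setOf_toReal {n : ℕ} (P : Perm (Fin n) → Prop) [DecidablePred P] :
    (uniformPerm n {p | P p}).toReal = #{p | P p} / Fintype.card (Perm (Fin n)) := by
  rw [uniformPerm, PMF.toMeasure_uniformOfFintype_apply _ MeasurableSpace.measurableSet_top,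
    ENNReal.toReal_div, ENNReal.toReal_natCast, ENNReal.toReal_natCast, ← Set.toFinset_card,
    Set.toFinset_ofPred]

theorem hoeffding_concentration (n : ℕ) (hn : 3 ≤ n) (a : Fin n → Fin n → ℝ)
    (hσ : 0 < sigmaA2 n a)
    (normA : ℝ) (hnorm : IsGreatest {x : ℝ | ∃ i j, x = |a i j - rowMean n a i|} normA) :
    ∀ t : ℝ, 0 ≤ t →
      ((uniformPerm n) {p | t ≤ (∑ i, a i (p i)) - muA n a}).toReal ≤
          Real.exp (-(t ^ 2) / (2 * (sigmaA2 n a + 8 * normA * t))) ∧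
        ((uniformPerm n) {p | (∑ i, a i (p i)) - muA n a ≤ -t}).toReal ≤
          Real.exp (-(t ^ 2) / (2 * (sigmaA2 n a + 8 * normA * t))) := by
  intro t ht
  have hn2 : 2 ≤ Fintype.card (Fin n) := by rw [Fintype.card_fin]; omega
  have hc : ∀ i j, |rowCentered n a i j| ≤ normA := fun i j ↦ hnorm.2 ⟨i, j, rfl⟩
  have hrow := sum_rowCentered a (by omega)
  have hV := sum_sq_rowCentered_swap_eq a (by omega)
  simp only [← permSum_rowCentered, uniformPerm_setOf_toReal,
    div_le_iff₀ (Nat.cast_pos.2 Fintype.card_pos : (0 : ℝ) < Fintype.card (Perm (Fin n)))]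
  exact ⟨(card_le_permSum_le hn2 hc hrow hσ (by simpa using hV.le) ht).trans_eq (mul_comm _ _),
    (card_permSum_le_neg_le hn2 hc hrow hσ (by simpa using hV.le) ht).trans_eq (mul_comm _ _)⟩
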